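/- If a randomized 1-selection mechanism with predictions is impartial, α-consistent, and β-robust, then β ≤ 1/2 and α + β ≤ 1. -/

import Mathlib

/-- `E` has no self-loops. -/
def NoLoops {n : ℕ} (E : Finset (Fin n × Fin n)) : Prop := ∀ i, (i, i) ∉ E

/-- The indegree of vertex `i` in the graph with edge set `E`. -/
def indeg {n : ℕ} (E : Finset (Fin n × Fin n)) (i : Fin n) : ℕ :=
  (E.filter (fun e => e.2 = i)).card

/-- `Δ(G)`: the maximum indegree of a vertex. -/
def maxIndeg {n : ℕ} (E : Finset (Fin n × Fin n)) : ℕ :=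
  Finset.univ.sup (indeg E)

/-- A plurality graph: every vertex has outdegree exactly one. -/
def Plurality {n : ℕ} (E : Finset (Fin n × Fin n)) : Prop :=
  ∀ i, (E.filter (fun e => e.1 = i)).card = 1

/-- A (randomized) 1-selection mechanism with predictions: for each `n`, given a predicted
vertex and a graph, it assigns a selection probability to each vertex. -/
abbrev Mech1 : Type :=
  ∀ n : ℕ, Fin n → Finset (Fin n × Fin n) → Fin n → ℝ

/-- The probabilities lie in `[0,1]` and sum to at most 1 on every valid input. -/
def ValidMech1 (f : Mech1) : Prop :=
  ∀ (n : ℕ) (ih : Fin n) (E : Finset (Fin n × Fin n)), NoLoops E →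
    (∀ i, 0 ≤ f n ih E i ∧ f n ih E i ≤ 1) ∧ (∑ i, f n ih E i) ≤ 1

/-- Impartiality: the probability of selecting `i` does not depend on `i`'s outgoing edges. -/
def Impartial1 (f : Mech1) : Prop :=
  ∀ (n : ℕ) (ih : Fin n) (E E' : Finset (Fin n × Fin n)) (i : Fin n),
    NoLoops E → NoLoops E' →
    E.filter (fun e => e.1 ≠ i) = E'.filter (fun e => e.1 ≠ i) →
    f n ih E i = f n ih E' i

/-- `α`-consistency: an `α`-approximation whenever the prediction is accurate. -/
def Consistent1 (α : ℝ) (f : Mech1) : Prop :=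
  ∀ (n : ℕ) (ih : Fin n) (E : Finset (Fin n × Fin n)),
    NoLoops E → indeg E ih = maxIndeg E →
    α * (maxIndeg E : ℝ) ≤ ∑ i, f n ih E i * (indeg E i : ℝ)

/-- `β`-robustness: a `β`-approximation regardless of the prediction. -/
def Robust1 (β : ℝ) (f : Mech1) : Prop :=
  ∀ (n : ℕ) (ih : Fin n) (E : Finset (Fin n × Fin n)), NoLoops E →
    β * (maxIndeg E : ℝ) ≤ ∑ i, f n ih E i * (indeg E i : ℝ)

/-!
Take two vertices `i ≠ j` with `i` predicted. On the single edge `j → i`, consistency and robustness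
force `i` to be selected with probability at least `max α β`; on the single edge `i → j`, robustness
forces `j` to be selected with probability at least `β`. By impartiality both probabilities survive
in the 2-cycle `i ⇄ j`, where they sum to at most one, so `2β ≤ 1` and `α + β ≤ 1`.
-/

section Graph

variable {n : ℕ}

theorem noLoops_singleton {i j : Fin n} (hij : i ≠ j) : NoLoops {(j, i)} := by
  intro k
  simpa using fun hkj => hkj ▸ hij.symm

theorem noLoops_pair {i j : Fin n} (hij : i ≠ j) : NoLoops {(i, j), (j, i)} := by
  intro k
  simp only [Finset.mem_insert, Finset.mem_singleton, Prod.mk.injEq, not_or, not_and]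
  exact ⟨fun hki hkj => hij (hki ▸ hkj), fun hkj hki => hij (hki ▸ hkj)⟩

theorem indeg_singleton (i j k : Fin n) : indeg {(j, i)} k = if k = i then 1 else 0 := by
  unfold indeg
  split_ifs with hk <;> simp [Finset.filter_singleton, hk, eq_comm]

theorem maxIndeg_singleton (i j : Fin n) : maxIndeg {(j, i)} = 1 := by
  refine le_antisymm (Finset.sup_le fun k _ => ?_) ?_
  · rw [indeg_singleton]
    split_ifs <;> simp
  · calc 1 = indeg {(j, i)} i := by simp [indeg_singleton]
      _ ≤ maxIndeg {(j, i)} := Finset.le_sup (Finset.mem_univ i)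

theorem sum_mul_indeg_singleton (g : Fin n → ℝ) (i j : Fin n) :
    ∑ k, g k * (indeg {(j, i)} k : ℝ) = g i := by
  simp [indeg_singleton]

end Graph

section Mechanism

variable {f : Mech1} {n : ℕ} {i j : Fin n}

theorem Robust1.le_apply_singleton {β : ℝ} (hrob : Robust1 β f) (hij : i ≠ j) (ih : Fin n) :
    β ≤ f n ih {(j, i)} i := by
  simpa [maxIndeg_singleton, sum_mul_indeg_singleton] using hrob n ih _ (noLoops_singleton hij)

theorem Consistent1.le_apply_singleton {α : ℝ} (hcons : Consistent1 α f) (hij : i ≠ j) :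
    α ≤ f n i {(j, i)} i := by
  have hacc : indeg {(j, i)} i = maxIndeg {(j, i)} := by
    simp [indeg_singleton, maxIndeg_singleton]
  simpa [maxIndeg_singleton, sum_mul_indeg_singleton] using
    hcons n i _ (noLoops_singleton hij) hacc

theorem ValidMech1.apply_add_apply_le_one (hvalid : ValidMech1 f) (ih : Fin n)
    {E : Finset (Fin n × Fin n)} (hE : NoLoops E) (hij : i ≠ j) :
    f n ih E i + f n ih E j ≤ 1 := by
  obtain ⟨hbounds, hsum⟩ := hvalid n ih E hE
  calc f n ih E i + f n ih E j = ∑ k ∈ {i, j}, f n ih E k := (Finset.sum_pair hij).symm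
    _ ≤ ∑ k, f n ih E k :=
      Finset.sum_le_sum_of_subset_of_nonneg (Finset.subset_univ _) fun k _ _ => (hbounds k).1
    _ ≤ 1 := hsum

theorem Impartial1.apply_insert_of_fst_eq (himp : Impartial1 f) (ih : Fin n)
    {E : Finset (Fin n × Fin n)} {e : Fin n × Fin n} (he : e.1 = i)
    (hE : NoLoops E) (heE : NoLoops (insert e E)) :
    f n ih (insert e E) i = f n ih E i :=
  himp n ih _ _ i heE hE (by simp [Finset.filter_insert, he])

theorem apply_singleton_add_apply_singleton_le_one (hvalid : ValidMech1 f) (himp : Impartial1 f)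
    (hij : i ≠ j) (ih : Fin n) :
    f n ih {(j, i)} i + f n ih {(i, j)} j ≤ 1 := by
  have hcycle := noLoops_pair hij
  have hi : f n ih {(i, j), (j, i)} i = f n ih {(j, i)} i :=
    himp.apply_insert_of_fst_eq ih rfl (noLoops_singleton hij) hcycle
  have hj : f n ih {(i, j), (j, i)} j = f n ih {(i, j)} j := by
    rw [Finset.pair_comm] at hcycle ⊢
    exact himp.apply_insert_of_fst_eq ih rfl (noLoops_singleton hij.symm) hcycle
  rw [← hi, ← hj]
  exact hvalid.apply_add_apply_le_one ih hcycle hij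

end Mechanism

theorem upper_bound_one_selection (α β : ℝ) (f : Mech1)
    (hvalid : ValidMech1 f) (himp : Impartial1 f)
    (hcons : Consistent1 α f) (hrob : Robust1 β f) :
    β ≤ 1 / 2 ∧ α + β ≤ 1 := by
  have h01 : (0 : Fin 2) ≠ 1 := by decide
  have hsum := apply_singleton_add_apply_singleton_le_one hvalid himp h01 0
  have hα := hcons.le_apply_singleton h01
  have hβ0 := hrob.le_apply_singleton h01 0
  have hβ1 := hrob.le_apply_singleton h01.symm 0
  constructor <;> linarith
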